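/- arXiv:1506.07129 — 4 statements merged into one kernel-verified Lean document; each statement's English description precedes it below -/
import Mathlib

section
/- Let 𝔤 be a Lie algebra over ℝ with a complex structure J (i.e., 𝔤 is a complex Lie algebra with multiplication by i given by J), and let 𝔨 ⊆ 𝔤 be a real Lie subalgebra with 𝔨 = 𝔞 ⊕ 𝔨̃ and 𝔤 = 𝔞 ⊕ 𝔨̃ ⊕ J𝔨̃ (direct sums of real vector subspaces), where 𝔞 is a complex Lie subalgebra of 𝔤 contained in the center of 𝔨 and 𝔨̃ is a Lie subalgebra of 𝔨. Then the center of 𝔨 equals 𝔞 ⊕ (𝔨̃ ∩ z(𝔨̃)), i.e., z(𝔨) = 𝔞 ⊕ z(𝔨̃). -/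
/-- Claim: with `𝔨 = 𝔞 ⊕ 𝔨̃` and `𝔤 = 𝔞 ⊕ 𝔨̃ ⊕ J𝔨̃`, where `𝔞` is a complex (J-invariant)
Lie subalgebra of `𝔤` contained in the center of `𝔨` and `𝔨̃` a Lie subalgebra of `𝔨`,
the center of `𝔨` decomposes as `z(𝔨) = 𝔞 ⊕ z(𝔨̃)`. -/
theorem center_decomposition
    {𝔤 : Type*} [LieRing 𝔤] [LieAlgebra ℝ 𝔤]
    (J : 𝔤 →ₗ[ℝ] 𝔤) (hJ2 : ∀ x, J (J x) = -x)
    (hJbr : ∀ x y : 𝔤, ⁅x, J y⁆ = J ⁅x, y⁆)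
    (𝔞 𝔨t 𝔨 : LieSubalgebra ℝ 𝔤)
    -- `𝔞` is complex (J-invariant)
    (h𝔞J : ∀ x ∈ 𝔞, J x ∈ 𝔞)
    -- `𝔞` is contained in the center of `𝔨`
    (h𝔞z : ∀ x ∈ 𝔞, x ∈ 𝔨 ∧ ∀ y ∈ 𝔨, ⁅x, y⁆ = 0)
    -- `𝔨̃` is a Lie subalgebra of `𝔨`
    (h𝔨t : 𝔨t ≤ 𝔨)
    -- `𝔨 = 𝔞 ⊕ 𝔨̃` as real vector subspaces
    (hksum : 𝔨.toSubmodule = 𝔞.toSubmodule ⊔ 𝔨t.toSubmodule)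
    (hkdisj : Disjoint 𝔞.toSubmodule 𝔨t.toSubmodule)
    -- `𝔤 = 𝔞 ⊕ 𝔨̃ ⊕ J𝔨̃` as real vector subspaces
    (hgsum : (⊤ : Submodule ℝ 𝔤) =
      𝔞.toSubmodule ⊔ 𝔨t.toSubmodule ⊔ (𝔨t.toSubmodule.map J))
    (hgdisj : Disjoint (𝔞.toSubmodule ⊔ 𝔨t.toSubmodule) (𝔨t.toSubmodule.map J))
    -- centers of `𝔨` and `𝔨̃`, as submodules of `𝔤`
    (z𝔨 z𝔨t : Submodule ℝ 𝔤)
    (hz𝔨 : ∀ x : 𝔤, x ∈ z𝔨 ↔ x ∈ 𝔨 ∧ ∀ y ∈ 𝔨, ⁅x, y⁆ = 0)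
    (hz𝔨t : ∀ x : 𝔤, x ∈ z𝔨t ↔ x ∈ 𝔨t ∧ ∀ y ∈ 𝔨t, ⁅x, y⁆ = 0) :
    z𝔨 = 𝔞.toSubmodule ⊔ z𝔨t ∧ Disjoint 𝔞.toSubmodule z𝔨t := by
  have hzkt_le : z𝔨t ≤ z𝔨 := by
    intro z hz
    obtain ⟨hzt, hzc⟩ := (hz𝔨t z).mp hz
    refine (hz𝔨 z).mpr ⟨h𝔨t hzt, fun y hy => ?_⟩
    have : y ∈ 𝔞.toSubmodule ⊔ 𝔨t.toSubmodule := hksum ▸ hy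
    obtain ⟨a, ha, t, ht, rfl⟩ := Submodule.mem_sup.mp this
    have h1 : ⁅z, a⁆ = 0 := by
      have := (h𝔞z a ha).2 z (h𝔨t hzt)
      rw [← lie_skew, this, neg_zero]
    rw [lie_add, h1, hzc t ht, add_zero]
  have h𝔞_le : 𝔞.toSubmodule ≤ z𝔨 := fun a ha =>
    (hz𝔨 a).mpr ⟨(h𝔞z a ha).1, (h𝔞z a ha).2⟩
  constructor
  · apply le_antisymm
    · intro z hz
      obtain ⟨hzk, hzc⟩ := (hz𝔨 z).mp hz
      have : z ∈ 𝔞.toSubmodule ⊔ 𝔨t.toSubmodule := hksum ▸ hzk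
      obtain ⟨a, ha, t, ht, rfl⟩ := Submodule.mem_sup.mp this
      refine Submodule.mem_sup.mpr ⟨a, ha, t, ?_, rfl⟩
      refine (hz𝔨t t).mpr ⟨ht, fun y hy => ?_⟩
      have h1 : ⁅a + t, y⁆ = 0 := hzc y (h𝔨t hy)
      have h2 : ⁅a, y⁆ = 0 := (h𝔞z a ha).2 y (h𝔨t hy)
      have := h1
      rw [add_lie, h2, zero_add] at this
      exact this
    · exact sup_le h𝔞_le hzkt_le
  · exact hkdisj.mono_right fun z hz => ((hz𝔨t z).mp hz).1
end

section
/- With 𝔤, 𝔨 = 𝔞 ⊕ 𝔨̃, 𝔤 = 𝔞 ⊕ 𝔨̃ ⊕ J𝔨̃ as above, the center of 𝔤 satisfies z(𝔤) = 𝔞 ⊕ z(𝔨̃) ⊕ J z(𝔨̃). -/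
/-- Claim: with `𝔨 = 𝔞 ⊕ 𝔨̃` and `𝔤 = 𝔞 ⊕ 𝔨̃ ⊕ J𝔨̃` as above, the center of `𝔤`
decomposes as `z(𝔤) = 𝔞 ⊕ z(𝔨̃) ⊕ J z(𝔨̃)`. -/
theorem center_g_decomposition
    {𝔤 : Type*} [LieRing 𝔤] [LieAlgebra ℝ 𝔤]
    (J : 𝔤 →ₗ[ℝ] 𝔤) (hJ2 : ∀ x, J (J x) = -x)
    (hJbr : ∀ x y : 𝔤, ⁅x, J y⁆ = J ⁅x, y⁆)
    (𝔞 𝔨t 𝔨 : LieSubalgebra ℝ 𝔤)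
    (h𝔞J : ∀ x ∈ 𝔞, J x ∈ 𝔞)
    (h𝔞z : ∀ x ∈ 𝔞, x ∈ 𝔨 ∧ ∀ y ∈ 𝔨, ⁅x, y⁆ = 0)
    (h𝔨t : 𝔨t ≤ 𝔨)
    (hksum : 𝔨.toSubmodule = 𝔞.toSubmodule ⊔ 𝔨t.toSubmodule)
    (hkdisj : Disjoint 𝔞.toSubmodule 𝔨t.toSubmodule)
    (hgsum : (⊤ : Submodule ℝ 𝔤) =
      𝔞.toSubmodule ⊔ 𝔨t.toSubmodule ⊔ (𝔨t.toSubmodule.map J))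
    (hgdisj : Disjoint (𝔞.toSubmodule ⊔ 𝔨t.toSubmodule) (𝔨t.toSubmodule.map J))
    (z𝔤 z𝔨t : Submodule ℝ 𝔤)
    (hz𝔤 : ∀ x : 𝔤, x ∈ z𝔤 ↔ ∀ y : 𝔤, ⁅x, y⁆ = 0)
    (hz𝔨t : ∀ x : 𝔤, x ∈ z𝔨t ↔ x ∈ 𝔨t ∧ ∀ y ∈ 𝔨t, ⁅x, y⁆ = 0) :
    z𝔤 = 𝔞.toSubmodule ⊔ z𝔨t ⊔ z𝔨t.map J := by
  -- bracket with J on the left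
  have hJbl : ∀ x y : 𝔤, ⁅J x, y⁆ = J ⁅x, y⁆ := by
    intro x y
    rw [← lie_skew, hJbr, ← lie_skew x y, map_neg]
  -- decomposition of any element
  have hdec : ∀ y : 𝔤, ∃ a ∈ 𝔞.toSubmodule, ∃ k ∈ 𝔨t.toSubmodule,
      ∃ k' ∈ 𝔨t.toSubmodule, y = a + k + J k' := by
    intro y
    have hy : y ∈ (⊤ : Submodule ℝ 𝔤) := trivial
    rw [hgsum] at hy
    obtain ⟨w, hw, z, hz, rfl⟩ := Submodule.mem_sup.mp hy
    obtain ⟨a, ha, k, hk, rfl⟩ := Submodule.mem_sup.mp hw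
    obtain ⟨k', hk', rfl⟩ := Submodule.mem_map.mp hz
    exact ⟨a, ha, k, hk, k', hk', rfl⟩
  -- 𝔞 ⊆ z𝔤
  have h𝔞le : ∀ x ∈ 𝔞, ∀ y : 𝔤, ⁅x, y⁆ = 0 := by
    intro x hx y
    obtain ⟨a, ha, k, hk, k', hk', rfl⟩ := hdec y
    rw [lie_add, lie_add, hJbr,
      (h𝔞z x hx).2 a (h𝔞z a ha).1,
      (h𝔞z x hx).2 k (h𝔨t hk),
      (h𝔞z x hx).2 k' (h𝔨t hk'), map_zero, add_zero, add_zero]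
  -- z𝔨t ⊆ z𝔤
  have hzle : ∀ x ∈ z𝔨t, ∀ y : 𝔤, ⁅x, y⁆ = 0 := by
    intro x hx y
    obtain ⟨hx1, hx2⟩ := (hz𝔨t x).mp hx
    obtain ⟨a, ha, k, hk, k', hk', rfl⟩ := hdec y
    have hxa : ⁅x, a⁆ = 0 := by
      rw [← lie_skew, (h𝔞z a ha).2 x (h𝔨t hx1), neg_zero]
    rw [lie_add, lie_add, hJbr, hxa, hx2 k hk, hx2 k' hk', map_zero,
      add_zero, add_zero]
  apply le_antisymm
  · -- z𝔤 ≤ RHS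
    intro x hx
    obtain ⟨a, ha, k, hk, k', hk', rfl⟩ := hdec x
    have hx' := (hz𝔤 _).mp hx
    -- for y ∈ 𝔨t, ⁅k, y⁆ = 0 and ⁅k', y⁆ = 0
    have key : ∀ y ∈ 𝔨t, ⁅k, y⁆ = 0 ∧ ⁅k', y⁆ = 0 := by
      intro y hy
      have h0 := hx' y
      have hay : ⁅a, y⁆ = 0 := (h𝔞z a ha).2 y (h𝔨t hy)
      have hJk'y : ⁅J k', y⁆ = J ⁅k', y⁆ := hJbl k' y
      rw [add_lie, add_lie, hay, zero_add, hJk'y] at h0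
      -- so ⁅k, y⁆ = - J ⁅k', y⁆
      have hk_eq : ⁅k, y⁆ = -(J ⁅k', y⁆) := eq_neg_of_add_eq_zero_left h0
      have h1 : ⁅k, y⁆ ∈ 𝔨t.toSubmodule := 𝔨t.lie_mem hk hy
      have h2 : ⁅k, y⁆ ∈ Submodule.map J 𝔨t.toSubmodule :=
        ⟨-⁅k', y⁆, neg_mem (𝔨t.lie_mem hk' hy), by rw [map_neg, ← hk_eq]⟩
      have hzero : ⁅k, y⁆ = 0 :=
        (Submodule.disjoint_def.mp hgdisj) _ (Submodule.mem_sup_right h1) h2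
      have hJz : J ⁅k', y⁆ = 0 := by
        rw [hzero] at hk_eq
        exact (neg_eq_zero.mp hk_eq.symm)
      have hk'z : ⁅k', y⁆ = 0 := by
        have h3 := hJ2 ⁅k', y⁆
        rw [hJz, map_zero] at h3
        exact (neg_eq_zero.mp h3.symm)
      exact ⟨hzero, hk'z⟩
    have hkz : k ∈ z𝔨t := (hz𝔨t k).mpr ⟨hk, fun y hy => (key y hy).1⟩
    have hk'z : k' ∈ z𝔨t := (hz𝔨t k').mpr ⟨hk', fun y hy => (key y hy).2⟩
    exact add_mem (add_mem
      (Submodule.mem_sup_left (Submodule.mem_sup_left ha))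
      (Submodule.mem_sup_left (Submodule.mem_sup_right hkz)))
      (Submodule.mem_sup_right ⟨k', hk'z, rfl⟩)
  · -- RHS ≤ z𝔤
    refine sup_le (sup_le ?_ ?_) ?_
    · intro x hx
      exact (hz𝔤 x).mpr (h𝔞le x hx)
    · intro x hx
      exact (hz𝔤 x).mpr (hzle x hx)
    · intro x hx
      obtain ⟨w, hw, rfl⟩ := Submodule.mem_map.mp hx
      refine (hz𝔤 _).mpr fun y => ?_
      rw [hJbl, hzle w hw y, map_zero]
end

section
/- Let (R,d) be a metric space with a group G acting by isometries, let F : R → ℝ be a function, and let F̄ be its greatest d-lower semicontinuous extension to the completion R̄. Suppose: (1) every minimizing sequence of F̄ that is d-bounded has a subsequence converging to a minimizer; (2) the set of minimizers of F̄ is nonempty, contained in R, and G acts on it transitively; (3) F is G-invariant; and (4) F̄ is convex and continuous along some d-geodesic joining any two points of R. If additionally for all u,v ∈ R there is g ∈ G with d_G(Gu,Gv) = d(u,g·v), then there exist constants C, D > 0 such that F(u) ≥ C·d_G(G·0, Gu) − D for all u ∈ R, where 0 ∈ R is a fixed base point. -/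
open UniformSpace Filter Topology

/-- The direction "(i) ⇒ (ii)" of the general existence/properness principle:
under hypotheses (P1)–(P7), existence of minimizers of the greatest lsc extension `F̄`
of `F` on the metric completion implies that `F` grows at least linearly in the orbit
pseudometric `d_G`. -/
theorem existence_implies_properness
    {R : Type*} [MetricSpace R] {G : Type*} [Group G] [MulAction G R]
    (o : R)  -- base point `0 ∈ R`
    -- (P4): `G` acts by `d`-isometries
    (hiso : ∀ (g : G) (u v : R), dist (g • u) (g • v) = dist u v)
    -- the orbit pseudometric `d_G`
    (dG : R → R → ℝ)
    (hdG : ∀ u v : R, dG u v = sInf {r : ℝ | ∃ f g : G, r = dist (f • u) (g • v)})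
    (F : R → ℝ)
    -- `F̄` is the greatest `d`-lsc extension of `F` to the completion
    (Fbar : Completion R → EReal)
    (hFbar : ∀ u : Completion R, Fbar u =
      ⨆ (ε : ℝ) (_ : 0 < ε),
        ⨅ (v : R) (_ : dist u (v : Completion R) ≤ ε), (F v : EReal))
    -- (P2): bounded minimizing sequences subconverge to a minimizer
    (hP2 : ∀ u : ℕ → Completion R,
      Tendsto (fun j => Fbar (u j)) atTop (nhds (⨅ w : Completion R, Fbar w)) →
      (∃ C : ℝ, ∀ j, dist ((o : Completion R)) (u j) ≤ C) →
      ∃ (m : Completion R) (φ : ℕ → ℕ), StrictMono φ ∧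
        (∀ w : Completion R, Fbar m ≤ Fbar w) ∧
        Tendsto (fun k => u (φ k)) atTop (nhds m))
    -- minimizers exist
    (hexists : ∃ m : Completion R, ∀ w : Completion R, Fbar m ≤ Fbar w)
    -- (P3): minimizers lie in `R`
    (hP3 : ∀ m : Completion R, (∀ w : Completion R, Fbar m ≤ Fbar w) →
      ∃ v : R, m = (v : Completion R))
    -- (P5): `G` acts transitively on minimizers
    (hP5 : ∀ v v' : R,
      (∀ w : Completion R, Fbar (v : Completion R) ≤ Fbar w) →
      (∀ w : Completion R, Fbar (v' : Completion R) ≤ Fbar w) →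
      ∃ g : G, g • v = v')
    -- (P7)/Lemma: `F` is `G`-invariant
    (hinv : ∀ (g : G) (u : R), F (g • u) = F u)
    -- (P1): convexity and continuity of `F̄` along some `d`-geodesic joining any two points
    (hP1 : ∀ u0 u1 : R, ∃ γ : ℝ → Completion R, γ 0 = (u0 : Completion R) ∧
      γ 1 = (u1 : Completion R) ∧
      (∀ s ∈ Set.Icc (0:ℝ) 1, ∀ t ∈ Set.Icc (0:ℝ) 1,
        dist (γ s) (γ t) = |s - t| * dist ((u0 : Completion R)) ((u1 : Completion R))) ∧
      ∃ f : ℝ → ℝ, ContinuousOn f (Set.Icc (0:ℝ) 1) ∧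
        ConvexOn ℝ (Set.Icc (0:ℝ) 1) f ∧
        ∀ t ∈ Set.Icc (0:ℝ) 1, Fbar (γ t) = (f t : EReal))
    -- (P6): the orbit distance between points of `R` is attained
    (hP6 : ∀ u v : R, ∃ g : G, dG u v = dist u (g • v)) :
    ∃ C > (0:ℝ), ∃ D > (0:ℝ), ∀ u : R, F u ≥ C * dG o u - D := by

  classical
  by_contra hcon
  push_neg at hcon
  -- basic facts about the orbit sets
  have hSne : ∀ u v : R, Set.Nonempty {r : ℝ | ∃ f g : G, r = dist (f • u) (g • v)} :=
    fun u v => ⟨dist ((1:G) • u) ((1:G) • v), 1, 1, rfl⟩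
  have hSbdd : ∀ u v : R, BddBelow {r : ℝ | ∃ f g : G, r = dist (f • u) (g • v)} := by
    intro u v
    refine ⟨0, ?_⟩
    rintro r ⟨f, g, rfl⟩
    exact dist_nonneg
  have hdGle : ∀ (u v : R) (f g : G), dG u v ≤ dist (f • u) (g • v) := by
    intro u v f g
    rw [hdG]
    exact csInf_le (hSbdd u v) ⟨f, g, rfl⟩
  have hdGnonneg : ∀ u v : R, 0 ≤ dG u v := by
    intro u v
    rw [hdG]
    apply le_csInf (hSne u v)
    rintro r ⟨f, g, rfl⟩
    exact dist_nonneg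
  have hdGinv : ∀ (g : G) (u v : R), dG (g • u) v = dG u v := by
    intro g u v
    rw [hdG, hdG]
    congr 1
    ext r
    constructor
    · rintro ⟨f, h, rfl⟩
      exact ⟨f * g, h, by rw [mul_smul]⟩
    · rintro ⟨f, h, rfl⟩
      refine ⟨f * g⁻¹, h, ?_⟩
      rw [smul_smul, inv_mul_cancel_right]
  have htri : ∀ a b c : R, dG a c ≤ dG a b + dG b c := by
    intro a b c
    have key : ∀ x ∈ {r : ℝ | ∃ f g : G, r = dist (f • a) (g • b)},
        ∀ y ∈ {r : ℝ | ∃ f g : G, r = dist (f • b) (g • c)}, dG a c ≤ x + y := by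
      rintro x ⟨f, g, rfl⟩ y ⟨f', g', rfl⟩
      have h2 : dist ((g * f'⁻¹ * f') • b) ((g * f'⁻¹ * g') • c) = dist (f' • b) (g' • c) := by
        have h := hiso (g * f'⁻¹) (f' • b) (g' • c)
        rw [smul_smul, smul_smul] at h
        exact h
      have h3 : (g * f'⁻¹ * f') = g := by group
      calc dG a c ≤ dist (f • a) ((g * f'⁻¹ * g') • c) := hdGle a c f _
        _ ≤ dist (f • a) (g • b) + dist (g • b) ((g * f'⁻¹ * g') • c) := dist_triangle _ _ _
        _ = dist (f • a) (g • b) + dist (f' • b) (g' • c) := by rw [← h2, h3]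
    have step1 : ∀ y ∈ {r : ℝ | ∃ f g : G, r = dist (f • b) (g • c)},
        dG a c - y ≤ dG a b := by
      intro y hy
      rw [hdG a b]
      apply le_csInf (hSne a b)
      intro x hx
      linarith [key x hx y hy]
    have step2 : dG a c - dG a b ≤ dG b c := by
      rw [hdG b c]
      apply le_csInf (hSne b c)
      intro y hy
      linarith [step1 y hy]
    linarith
  -- Fbar ≤ F on R
  have hFle : ∀ u : R, Fbar (u : Completion R) ≤ (F u : EReal) := by
    intro u
    rw [hFbar]
    refine iSup_le fun ε => iSup_le fun hε => ?_
    exact iInf₂_le u (by rw [Completion.dist_eq, dist_self]; exact hε.le)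
  -- a minimizer in R
  obtain ⟨m0, hm0⟩ := hexists
  obtain ⟨m, rfl⟩ := hP3 m0 hm0
  obtain ⟨γ0, hγ00, -, -, f0, -, -, hf0⟩ := hP1 m m
  set μ := f0 0 with hμdef
  have hμ : Fbar (m : Completion R) = (μ : EReal) := by
    rw [← hγ00]
    exact hf0 0 ⟨le_rfl, zero_le_one⟩
  have hInf : (⨅ w : Completion R, Fbar w) = (μ : EReal) :=
    le_antisymm ((iInf_le Fbar ((m : Completion R))).trans_eq hμ)
      (le_iInf fun w => hμ.symm.trans_le (hm0 w))
  have hFge : ∀ u : R, μ ≤ F u := by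
    intro u
    have h1 : (μ : EReal) ≤ (F u : EReal) :=
      (hμ.symm.trans_le (hm0 ((u : Completion R)))).trans (hFle u)
    exact_mod_cast h1
  set A := dG o m with hAdef
  have hA : 0 ≤ A := hdGnonneg o m
  -- the bad sequence
  have hseq : ∀ j : ℕ, ∃ u : R, F u < (1 / ((j:ℝ) + 1)) * dG o u - ((j:ℝ) + 1) :=
    fun j => hcon (1 / ((j:ℝ) + 1)) (by positivity) ((j:ℝ) + 1) (by positivity)
  choose u hu using hseq
  choose g hg using fun j => hP6 m (u j)
  set v : ℕ → R := fun j => g j • u j with hvdef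
  set T : ℕ → ℝ := fun j => dG m (u j) with hTdef
  have hTdist : ∀ j, dist m (v j) = T j := fun j => (hg j).symm
  have hdGou : ∀ j : ℕ, dG o (u j) ≤ A + T j := fun j => htri o m (u j)
  obtain ⟨N, hN⟩ := exists_nat_ge (|μ| + A + 3)
  have hjcast : ∀ j : ℕ, N ≤ j → (|μ| + A + 3 : ℝ) ≤ (j : ℝ) :=
    fun j hj => le_trans hN (Nat.cast_le.mpr hj)
  have hjpos : ∀ j : ℕ, (0:ℝ) < (j:ℝ) + 1 := fun j => by positivity
  have hu' : ∀ j : ℕ, F (u j) < dG o (u j) / ((j:ℝ)+1) - ((j:ℝ)+1) := by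
    intro j
    have := hu j
    rw [one_div, inv_mul_eq_div] at this
    exact this
  have hdGbig : ∀ j : ℕ, N ≤ j → (μ + ((j:ℝ)+1)) * ((j:ℝ)+1) < dG o (u j) := by
    intro j hj
    rw [← lt_div_iff₀ (hjpos j)]
    have h1 := hFge (u j)
    have h2 := hu' j
    linarith
  have hT2 : ∀ j : ℕ, N ≤ j → 2 ≤ T j := by
    intro j hj
    have hj' := hjcast j hj
    have h3 := hdGbig j hj
    have h4 := hdGou j
    have h5 : (A + 4) * 1 ≤ (μ + ((j:ℝ)+1)) * ((j:ℝ)+1) := by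
      apply mul_le_mul
      · have := neg_abs_le μ; linarith
      · linarith
      · norm_num
      · have := neg_abs_le μ; linarith
    linarith
  have hTpos : ∀ j : ℕ, N ≤ j → (0:ℝ) < T j := fun j hj => by linarith [hT2 j hj]
  have hs01 : ∀ j : ℕ, N ≤ j → 1 / T j ∈ Set.Icc (0:ℝ) 1 := by
    intro j hj
    have h0 := hTpos j hj
    constructor
    · positivity
    · rw [div_le_one h0]; linarith [hT2 j hj]
  -- distances along the geodesics
  choose γ hγ0 hγ1 hγd f hfc hfcvx hff using fun j => hP1 m (v j)
  have hdistmv : ∀ j, dist ((m : Completion R)) ((v j : Completion R)) = T j := by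
    intro j
    rw [Completion.dist_eq]
    exact hTdist j
  have hdmw : ∀ j : ℕ, N ≤ j → dist ((m : Completion R)) (γ j (1 / T j)) = 1 := by
    intro j hj
    have h0 := hTpos j hj
    have hd := hγd j 0 ⟨le_rfl, zero_le_one⟩ (1 / T j) (hs01 j hj)
    rw [hγ0 j] at hd
    rw [hd, hdistmv j, zero_sub, abs_neg, abs_of_nonneg (by positivity : (0:ℝ) ≤ 1 / T j),
      one_div_mul_cancel h0.ne']
  have hdwv : ∀ j : ℕ, N ≤ j → dist (γ j (1 / T j)) ((v j : Completion R)) = T j - 1 := by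
    intro j hj
    have h0 := hTpos j hj
    have h1 : 1 / T j ≤ 1 := (hs01 j hj).2
    have hd := hγd j (1 / T j) (hs01 j hj) 1 ⟨zero_le_one, le_rfl⟩
    rw [hγ1 j] at hd
    rw [hd, hdistmv j, abs_of_nonpos (by linarith), neg_sub]
    field_simp
  -- values of f
  have hf0j : ∀ j, f j 0 = μ := by
    intro j
    have h1 := hff j 0 ⟨le_rfl, zero_le_one⟩
    rw [hγ0 j, hμ] at h1
    exact_mod_cast h1.symm
  have hf1j : ∀ j, f j 1 ≤ F (u j) := by
    intro j
    have h1 := hff j 1 ⟨zero_le_one, le_rfl⟩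
    rw [hγ1 j] at h1
    have h2 : (f j 1 : EReal) ≤ (F (v j) : EReal) := h1.symm.trans_le (hFle (v j))
    have h3 : F (v j) = F (u j) := hinv _ _
    rw [h3] at h2
    exact_mod_cast h2
  have hflow : ∀ (j : ℕ) (t : ℝ), t ∈ Set.Icc (0:ℝ) 1 → μ ≤ f j t := by
    intro j t ht
    have h1 : (μ : EReal) ≤ Fbar (γ j t) := hμ.symm.trans_le (hm0 _)
    rw [hff j t ht] at h1
    exact_mod_cast h1
  -- convexity bound
  have hconvb : ∀ j : ℕ, N ≤ j → f j (1 / T j) ≤ μ + (1 / T j) * (F (u j) - μ) := by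
    intro j hj
    have hs := hs01 j hj
    have h0m : (0:ℝ) ∈ Set.Icc (0:ℝ) 1 := ⟨le_rfl, zero_le_one⟩
    have h1m : (1:ℝ) ∈ Set.Icc (0:ℝ) 1 := ⟨zero_le_one, le_rfl⟩
    have hc := (hfcvx j).2 h0m h1m (by linarith [hs.2] : (0:ℝ) ≤ 1 - 1 / T j) hs.1 (by ring)
    simp only [smul_eq_mul, mul_zero, mul_one, zero_add] at hc
    rw [hf0j j] at hc
    have h5 : (1 - 1 / T j) * μ + (1 / T j) * f j 1 ≤ (1 - 1 / T j) * μ + (1 / T j) * F (u j) := by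
      have := mul_le_mul_of_nonneg_left (hf1j j) hs.1
      linarith
    nlinarith [hc, h5]
  -- the quantitative upper bound
  have hub : ∀ j : ℕ, N ≤ j → f j (1 / T j) ≤ μ + (A + 2) * (1 / ((j:ℝ)+1)) := by
    intro j hj
    have hT0 := hTpos j hj
    have hT2' := hT2 j hj
    have hj' := hjcast j hj
    have hjp := hjpos j
    have hμj : (0:ℝ) ≤ μ + ((j:ℝ)+1) := by
      have := neg_abs_le μ; linarith
    have k1 : F (u j) - μ ≤ (A + T j) / ((j:ℝ)+1) := by
      have h2 := hu' j
      have h3 : dG o (u j) / ((j:ℝ)+1) ≤ (A + T j) / ((j:ℝ)+1) :=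
        by
        apply div_le_div_of_nonneg_right (hdGou j) hjp.le

      linarith
    have k2 : (1 / T j) * (F (u j) - μ) ≤ (1 / T j) * ((A + T j) / ((j:ℝ)+1)) :=
      mul_le_mul_of_nonneg_left k1 (by positivity)
    have k3 : (1 / T j) * ((A + T j) / ((j:ℝ)+1)) ≤ (A + 2) * (1 / ((j:ℝ)+1)) := by
      have e1 : (1 / T j) * ((A + T j) / ((j:ℝ)+1)) = (A + T j) / (((j:ℝ)+1) * T j) := by
        rw [one_div, inv_mul_eq_div, div_div]
      have e2 : (A + 2) * (1 / ((j:ℝ)+1)) = (A + 2) / ((j:ℝ)+1) := by ring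
      rw [e1, e2, div_le_div_iff₀ (by positivity) hjp]
      have hfac : 0 ≤ ((A + 2) * T j - (A + T j)) := by nlinarith
      nlinarith [mul_nonneg hfac hjp.le]
    linarith [hconvb j hj, k2, k3]
  -- the sequence for (P2)
  set w : ℕ → Completion R := fun k => γ (k + N) (1 / T (k + N)) with hwdef
  have hNle : ∀ k : ℕ, N ≤ k + N := fun k => Nat.le_add_left N k
  have htend : Tendsto (fun k => Fbar (w k)) atTop (nhds (⨅ z : Completion R, Fbar z)) := by
    rw [hInf]
    have heq : ∀ k : ℕ, Fbar (w k) = ((f (k + N) (1 / T (k + N)) : ℝ) : EReal) :=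
      fun k => hff (k + N) _ (hs01 _ (hNle k))
    have hreal : Tendsto (fun k : ℕ => f (k + N) (1 / T (k + N))) atTop (nhds μ) := by
      apply tendsto_of_tendsto_of_tendsto_of_le_of_le
        (g := fun _ : ℕ => μ) (h := fun k : ℕ => μ + (A + 2) * (1 / ((k:ℝ)+1)))
      · exact tendsto_const_nhds
      · have h0 : Tendsto (fun k : ℕ => (A + 2) * (1 / ((k:ℝ)+1))) atTop (nhds ((A+2) * 0)) :=
          tendsto_one_div_add_atTop_nhds_zero_nat.const_mul _
        rw [mul_zero] at h0
        simpa using tendsto_const_nhds.add h0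
      · intro k
        exact hflow (k + N) _ (hs01 _ (hNle k))
      · intro k
        have h1 := hub (k + N) (hNle k)
        have h2 : (1 : ℝ) / (((k + N : ℕ):ℝ)+1) ≤ 1 / ((k:ℝ)+1) := by
          apply one_div_le_one_div_of_le (hjpos k)
          have : (k:ℝ) ≤ ((k + N : ℕ):ℝ) := by exact_mod_cast Nat.le_add_right k N
          linarith
        have h3 := mul_le_mul_of_nonneg_left h2 (by linarith : (0:ℝ) ≤ A + 2)
        linarith
    have : Tendsto (fun k : ℕ => ((f (k + N) (1 / T (k + N)) : ℝ) : EReal)) atTop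
        (nhds ((μ : ℝ) : EReal)) :=
      (continuous_coe_real_ereal.tendsto μ).comp hreal
    simpa only [heq] using this
  have hbdd : ∃ C : ℝ, ∀ k, dist ((o : Completion R)) (w k) ≤ C := by
    refine ⟨dist ((o : Completion R)) ((m : Completion R)) + 1, fun k => ?_⟩
    have h1 := dist_triangle ((o : Completion R)) ((m : Completion R)) (w k)
    have h2 : dist ((m : Completion R)) (w k) = 1 := hdmw (k + N) (hNle k)
    linarith
  obtain ⟨mstar, φ, hφ, hmstarmin, hφtend⟩ := hP2 w htend hbdd
  obtain ⟨vstar, rfl⟩ := hP3 mstar hmstarmin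
  obtain ⟨gstar, hgstar⟩ := hP5 m vstar hm0 hmstarmin
  -- the limit minimizer stays far from the sequence: contradiction
  have hfar : ∀ k : ℕ, 1 ≤ dist ((vstar : Completion R)) (w k) := by
    intro k
    have hj := hNle k
    have h1 : T (k + N) ≤ dist vstar (v (k + N)) := by
      have ha : dG vstar (u (k + N)) ≤ dist ((1:G) • vstar) (g (k + N) • u (k + N)) :=
        hdGle _ _ _ _
      rw [one_smul] at ha
      have hb : dG vstar (u (k + N)) = T (k + N) := by
        rw [← hgstar, hdGinv]
      rw [hb] at ha
      exact ha
    have h2 : dist (w k) ((v (k + N) : Completion R)) = T (k + N) - 1 := hdwv (k + N) hj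
    have h3 : dist ((vstar : Completion R)) ((v (k + N) : Completion R))
        = dist vstar (v (k + N)) := Completion.dist_eq _ _
    have h4 := dist_triangle ((vstar : Completion R)) (w k) ((v (k + N) : Completion R))
    linarith
  obtain ⟨k0, hk0⟩ := Metric.tendsto_atTop.mp hφtend 1 one_pos
  have hk := hk0 k0 le_rfl
  have h5 := hfar (φ k0)
  rw [dist_comm] at hk
  linarith
end

section
/- Let (R,d) be a metric space with base point 0, F : R → ℝ lower semicontinuous, F̄ its greatest d-lsc extension to the completion R̄, and G a group acting on R by isometries with F G-invariant. Assume the compactness property: any sequence u_j ∈ R̄ with F̄(u_j) → inf F̄ and d(0,u_j) bounded has a subsequence converging to a minimizer. If there exist C, D > 0 with F(u) ≥ C·d_G(G·0, Gu) − D for all u ∈ R, then F̄ attains its infimum on R̄ (the set of minimizers is nonempty). -/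
/-!
By properness, `F` is bounded below by `-D`, and along any minimizing sequence `v j` the orbit
distances `d_G(G·0, G·v j)` stay bounded. Moving each `v j` inside its orbit to a point nearly
realizing that distance keeps `F (v j)` unchanged (invariance) and makes `d(0, v j)` bounded.
Since `F̄ ≤ F` on `R` and `F̄ ≥ inf F` everywhere, the same sequence is minimizing for `F̄` with
`inf F̄ = inf F`, so the compactness property provides a minimizer.
-/

open UniformSpace Filter Topology

noncomputable section

variable {R : Type*} [PseudoMetricSpace R]

/-- The orbit pseudometric `d_G(Gu, Gv)`. -/
def orbitDist (G : Type*) [SMul G R] (u v : R) : ℝ :=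
  sInf {r : ℝ | ∃ f g : G, r = dist (f • u) (g • v)}

/-- The greatest lower semicontinuous extension `F̄` of `F` to the completion. -/
def lscExtension (F : R → ℝ) (u : Completion R) : EReal :=
  ⨆ (ε : ℝ) (_ : 0 < ε), ⨅ (v : R) (_ : dist u (v : Completion R) ≤ ε), (F v : EReal)

section LscExtension

variable {F : R → ℝ}

theorem lscExtension_coe_le (F : R → ℝ) (v : R) : lscExtension F v ≤ F v :=
  iSup₂_le fun _ hε => iInf₂_le_of_le v (by rw [Completion.dist_eq, dist_self]; exact hε.le) le_rfl

theorem le_lscExtension {m : ℝ} (hm : ∀ v, m ≤ F v) (u : Completion R) :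
    (m : EReal) ≤ lscExtension F u :=
  le_trans (le_iInf₂ fun v _ => EReal.coe_le_coe (hm v)) (le_iSup₂_of_le 1 one_pos le_rfl)

theorem tendsto_lscExtension_of_tendsto {m : ℝ} (hm : ∀ v, m ≤ F v) {v : ℕ → R}
    (hv : Tendsto (F ∘ v) atTop (𝓝 m)) :
    Tendsto (fun j => lscExtension F (v j)) atTop (𝓝 (m : EReal)) :=
  tendsto_of_tendsto_of_tendsto_of_le_of_le tendsto_const_nhds (EReal.tendsto_coe.2 hv)
    (fun _ => le_lscExtension hm _) (fun j => lscExtension_coe_le F (v j))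

theorem iInf_lscExtension_eq {m : ℝ} (hm : ∀ v, m ≤ F v) {v : ℕ → R}
    (hv : Tendsto (F ∘ v) atTop (𝓝 m)) : ⨅ u, lscExtension F u = m :=
  le_antisymm
    (ge_of_tendsto (tendsto_lscExtension_of_tendsto hm hv) (.of_forall fun _ => iInf_le _ _))
    (le_iInf (le_lscExtension hm))

end LscExtension

section Orbit

variable {G : Type*}

theorem orbitDist_nonneg [SMul G R] (u v : R) : 0 ≤ orbitDist G u v :=
  Real.sInf_nonneg fun _ ⟨_, _, hr⟩ => hr ▸ dist_nonneg

theorem exists_dist_smul_lt_orbitDist_add [Group G] [MulAction G R] [IsIsometricSMul G R]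
    (u v : R) {δ : ℝ} (hδ : 0 < δ) : ∃ g : G, dist u (g • v) < orbitDist G u v + δ := by
  have hne : {r : ℝ | ∃ f g : G, r = dist (f • u) (g • v)}.Nonempty := ⟨_, 1, 1, rfl⟩
  obtain ⟨_, ⟨f, g, rfl⟩, hlt⟩ := Real.lt_sInf_add_pos hne hδ
  refine ⟨f⁻¹ * g, ?_⟩
  rwa [← dist_smul f, smul_smul, mul_inv_cancel_left]

theorem bddBelow_range_of_proper [SMul G R] {F : R → ℝ} {o : R} {C D : ℝ} (hC : 0 ≤ C)
    (hproper : ∀ u, C * orbitDist G o u - D ≤ F u) : BddBelow (Set.range F) :=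
  ⟨-D, by
    rintro _ ⟨u, rfl⟩
    nlinarith [hproper u, orbitDist_nonneg (G := G) o u]⟩

variable [Group G] [MulAction G R] [IsIsometricSMul G R] {F : R → ℝ} {o : R} {C D : ℝ}

theorem exists_bounded_minimizing_seq (hinv : ∀ (g : G) u, F (g • u) = F u) (hC : 0 < C)
    (hproper : ∀ u, C * orbitDist G o u - D ≤ F u) :
    ∃ v : ℕ → R, Tendsto (F ∘ v) atTop (𝓝 (⨅ u, F u)) ∧ ∃ B, ∀ j, dist o (v j) ≤ B := by
  obtain ⟨a, ha_anti, ha_lim, ha_mem⟩ :=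
    exists_seq_tendsto_sInf (Set.range_nonempty_iff_nonempty.2 ⟨o⟩)
      (bddBelow_range_of_proper hC.le hproper)
  choose w hw using ha_mem
  choose g hg using fun j => exists_dist_smul_lt_orbitDist_add (G := G) o (w j) one_pos
  refine ⟨fun j => g j • w j, ?_, (F (w 0) + D) / C + 1, fun j => ?_⟩
  · have hFa : F ∘ (fun j => g j • w j) = a := funext fun j => by
      simp only [Function.comp_apply, hinv, hw]
    rwa [hFa]
  · have hFw : F (w j) ≤ F (w 0) := by rw [hw, hw]; exact ha_anti (Nat.zero_le j)
    have horbit : orbitDist G o (w j) ≤ (F (w 0) + D) / C := by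
      rw [le_div_iff₀ hC]
      linarith [hproper (w j)]
    linarith [hg j]

end Orbit

end

theorem properness_implies_existence_general
    {R : Type*} [MetricSpace R] {G : Type*} [Group G] [MulAction G R]
    (o : R)  -- base point `0 ∈ R`
    (hiso : ∀ (g : G) (u v : R), dist (g • u) (g • v) = dist u v)
    (dG : R → R → ℝ)
    (hdG : ∀ u v : R, dG u v = sInf {r : ℝ | ∃ f g : G, r = dist (f • u) (g • v)})
    (F : R → ℝ)
    (Fbar : Completion R → EReal)
    (hFbar : ∀ u : Completion R, Fbar u =
      ⨆ (ε : ℝ) (_ : 0 < ε),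
        ⨅ (v : R) (_ : dist u (v : Completion R) ≤ ε), (F v : EReal))
    (hinv : ∀ (g : G) (u : R), F (g • u) = F u)
    -- (P2): bounded minimizing sequences subconverge to a minimizer
    (hP2 : ∀ u : ℕ → Completion R,
      Filter.Tendsto (fun j => Fbar (u j)) Filter.atTop
        (nhds (⨅ w : Completion R, Fbar w)) →
      (∃ C : ℝ, ∀ j, dist ((o : Completion R)) (u j) ≤ C) →
      ∃ (m : Completion R) (φ : ℕ → ℕ), StrictMono φ ∧
        (∀ w : Completion R, Fbar m ≤ Fbar w) ∧
        Filter.Tendsto (fun k => u (φ k)) Filter.atTop (nhds m))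
    -- properness: `F(u) ≥ C ⬝ d_G(G0, Gu) − D`
    (C D : ℝ) (hC : 0 < C)
    (hproper : ∀ u : R, F u ≥ C * dG o u - D) :
    ∃ m : Completion R, ∀ w : Completion R, Fbar m ≤ Fbar w := by
  have : IsIsometricSMul G R := ⟨fun g => Isometry.of_dist_eq (hiso g)⟩
  obtain rfl : Fbar = lscExtension F := funext hFbar
  obtain rfl : dG = orbitDist G := funext₂ hdG
  obtain ⟨v, hv, B, hvB⟩ := exists_bounded_minimizing_seq hinv hC hproper
  have hmin : ∀ u, ⨅ w, F w ≤ F u := ciInf_le (bddBelow_range_of_proper hC.le hproper)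
  obtain ⟨m, -, -, hm, -⟩ := hP2 (fun j => v j)
    (by rw [iInf_lscExtension_eq hmin hv]; exact tendsto_lscExtension_of_tendsto hmin hv)
    ⟨B, fun j => by rw [Completion.dist_eq]; exact hvB j⟩
  exact ⟨m, hm⟩

/-- The direction "properness ⇒ existence of minimizers" of the general
existence/properness principle: if `F` is `G`-invariant, lower semicontinuous,
satisfies the compactness property (P2), and is `d_G`-proper, then its greatest lsc
extension `F̄` attains its infimum on the completion. -/
theorem properness_implies_existence
    {R : Type*} [MetricSpace R] {G : Type*} [Group G] [MulAction G R]
    (o : R)  -- base point `0 ∈ R`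
    (hiso : ∀ (g : G) (u v : R), dist (g • u) (g • v) = dist u v)
    (dG : R → R → ℝ)
    (hdG : ∀ u v : R, dG u v = sInf {r : ℝ | ∃ f g : G, r = dist (f • u) (g • v)})
    (F : R → ℝ) (hlsc : LowerSemicontinuous F)
    (Fbar : Completion R → EReal)
    (hFbar : ∀ u : Completion R, Fbar u =
      ⨆ (ε : ℝ) (_ : 0 < ε),
        ⨅ (v : R) (_ : dist u (v : Completion R) ≤ ε), (F v : EReal))
    (hinv : ∀ (g : G) (u : R), F (g • u) = F u)
    -- (P2): bounded minimizing sequences subconverge to a minimizer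
    (hP2 : ∀ u : ℕ → Completion R,
      Filter.Tendsto (fun j => Fbar (u j)) Filter.atTop
        (nhds (⨅ w : Completion R, Fbar w)) →
      (∃ C : ℝ, ∀ j, dist ((o : Completion R)) (u j) ≤ C) →
      ∃ (m : Completion R) (φ : ℕ → ℕ), StrictMono φ ∧
        (∀ w : Completion R, Fbar m ≤ Fbar w) ∧
        Filter.Tendsto (fun k => u (φ k)) Filter.atTop (nhds m))
    -- properness: `F(u) ≥ C ⬝ d_G(G0, Gu) − D`
    (C D : ℝ) (hC : 0 < C) (hD : 0 < D)
    (hproper : ∀ u : R, F u ≥ C * dG o u - D) :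
    ∃ m : Completion R, ∀ w : Completion R, Fbar m ≤ Fbar w :=
  properness_implies_existence_general o hiso dG hdG F Fbar hFbar hinv hP2 C D hC hproper
end
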